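/- Bellman recursion for KL control: for the discrete-time KL control problem with deterministic dynamics x_{t+1} = F_t(x_t, u_t), stage costs C_t, terminal cost C_T, reference policy R, and weighting λ > 0, the value function satisfies J_t(x_t) = -λ log ∫_{U_t} exp(-(C_t(x_t,u_t) + J_{t+1}(F_t(x_t,u_t)))/λ) R(du_t|x_t) with J_T = C_T, and the minimizing policy is the Gibbs tilting Q*_{U_t|X_t}(B|x_t) = ∫_B exp(-ρ_t(x_t,u)/λ) R(du|x_t) / ∫_{U_t} exp(-ρ_t(x_t,u)/λ) R(du|x_t), where ρ_t(x_t,u) = C_t(x_t,u) + J_{t+1}(F_t(x_t,u)). -/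

import Mathlib

open MeasureTheory

section KLBellman

variable {X U : Type*} [MeasurableSpace X] [MeasurableSpace U]

/-- Real-valued KL divergence `D(μ‖ν) = ∫ log(dμ/dν) dμ` (meaningful when `μ ≪ ν`
and the log-likelihood ratio is `μ`-integrable). -/
noncomputable def klReal {α : Type*} [MeasurableSpace α] (μ ν : Measure α) : ℝ :=
  ∫ a, llr μ ν a ∂μ

/-- The value function of the discrete-time KL control problem with deterministic
dynamics `x_{t+1} = F_t(x_t,u_t)`, defined by the dynamic-programming recursion:
`J_T = C_T` and `J_t(x) = inf_q { ∫ (C_t(x,u) + J_{t+1}(F_t(x,u))) q(du) + λ D(q‖R_t(·|x)) }`,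
the infimum being over probability measures `q ≪ R_t(·|x)` with finite KL
divergence.  Indexed by remaining steps `k` and current time `t` (`t = T - k`). -/
noncomputable def klBellman (C : ℕ → X → U → ℝ) (CT : X → ℝ) (F : ℕ → X → U → X)
    (R : ℕ → X → Measure U) (lam : ℝ) : ℕ → ℕ → X → ℝ
  | 0, _, x => CT x
  | k + 1, t, x =>
      sInf { v : ℝ | ∃ q : Measure U, IsProbabilityMeasure q ∧ q ≪ R t x ∧
        Integrable (llr q (R t x)) q ∧
        v = (∫ u, (C t x u + klBellman C CT F R lam k (t + 1) (F t x u)) ∂q) +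
          lam * klReal q (R t x) }

/-!
For a bounded measurable cost `ρ`, a probability measure `R` and `λ > 0`, let `G` be the tilt of
`R` by `-ρ/λ` and `Z = ∫ exp(-ρ/λ) dR`. For every `q ≪ R` with finite relative entropy,
`λ D(q‖G) = ∫ ρ dq + λ D(q‖R) + λ log Z`, so Gibbs' inequality `D(q‖G) ≥ 0` shows that the free
energy `-λ log Z` is the least value of `∫ ρ dq + λ D(q‖R)`, attained at `q = G`. At each stage
this is applied to `ρ = C_t + J_{t+1} ∘ F_t`; an induction on the number of remaining steps keeps
the value functions measurable and bounded, as the duality requires at the next stage.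
-/

open Real ProbabilityTheory

noncomputable def freeEnergy {α : Type*} [MeasurableSpace α] (R : Measure α) (lam : ℝ)
    (ρ : α → ℝ) : ℝ :=
  -lam * log (∫ u, exp (-ρ u / lam) ∂(R))

noncomputable abbrev gibbsMeasure {α : Type*} [MeasurableSpace α] (R : Measure α) (lam : ℝ)
    (ρ : α → ℝ) : Measure α :=
  R.tilted fun u => -ρ u / lam

section FreeEnergy

variable {α : Type*} [MeasurableSpace α] {R : Measure α} {lam M : ℝ} {ρ : α → ℝ}

lemma integrable_of_abs_le (μ : Measure α) [IsFiniteMeasure μ] (hρ : Measurable ρ)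
    (hρM : ∀ u, |ρ u| ≤ M) : Integrable ρ μ :=
  .of_bound hρ.aestronglyMeasurable M (ae_of_all _ hρM)

lemma abs_integral_le_of_abs_le (μ : Measure α) [IsProbabilityMeasure μ]
    (hρM : ∀ u, |ρ u| ≤ M) : |∫ u, ρ u ∂μ| ≤ M := by
  simpa using norm_integral_le_of_norm_le_const (μ := μ) (f := ρ) (ae_of_all μ hρM)

lemma integrable_exp_neg_div (μ : Measure α) [IsFiniteMeasure μ] (hlam : 0 < lam)
    (hρ : Measurable ρ) (hρM : ∀ u, |ρ u| ≤ M) :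
    Integrable (fun u => exp (-ρ u / lam)) μ := by
  refine .of_bound (hρ.neg.div_const lam).exp.aestronglyMeasurable (exp (M / lam))
    (ae_of_all _ fun u => ?_)
  rw [norm_of_nonneg (exp_pos _).le, exp_le_exp]
  exact div_le_div_of_nonneg_right ((neg_le_abs (ρ u)).trans (hρM u)) hlam.le

lemma integral_llr_nonneg {μ ν : Measure α} [IsProbabilityMeasure μ] [IsProbabilityMeasure ν]
    (hμν : μ ≪ ν) (h : Integrable (llr μ ν) μ) : 0 ≤ ∫ x, llr μ ν x ∂μ := by
  simpa using InformationTheory.integral_llr_add_sub_measure_univ_nonneg hμν h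

variable [IsProbabilityMeasure R]

lemma isProbabilityMeasure_gibbsMeasure (hlam : 0 < lam) (hρ : Measurable ρ)
    (hρM : ∀ u, |ρ u| ≤ M) : IsProbabilityMeasure (gibbsMeasure R lam ρ) :=
  isProbabilityMeasure_tilted (integrable_exp_neg_div R hlam hρ hρM)

lemma llr_gibbsMeasure_ae (hlam : 0 < lam) (hρ : Measurable ρ) (hρM : ∀ u, |ρ u| ≤ M) :
    llr (gibbsMeasure R lam ρ) R =ᵐ[gibbsMeasure R lam ρ]
      fun u => -ρ u / lam - log (∫ u, exp (-ρ u / lam) ∂(R)) :=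
  (tilted_absolutelyContinuous R _).ae_le
    (log_rnDeriv_tilted_left_self (integrable_exp_neg_div R hlam hρ hρM))

lemma integrable_llr_gibbsMeasure (hlam : 0 < lam) (hρ : Measurable ρ) (hρM : ∀ u, |ρ u| ≤ M) :
    Integrable (llr (gibbsMeasure R lam ρ) R) (gibbsMeasure R lam ρ) := by
  have := isProbabilityMeasure_gibbsMeasure (R := R) hlam hρ hρM
  refine Integrable.congr ?_ (llr_gibbsMeasure_ae hlam hρ hρM).symm
  exact ((integrable_of_abs_le _ hρ hρM).neg.div_const lam).sub (integrable_const _)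

lemma integral_add_mul_llr_gibbsMeasure (hlam : 0 < lam) (hρ : Measurable ρ)
    (hρM : ∀ u, |ρ u| ≤ M) :
    (∫ u, ρ u ∂gibbsMeasure R lam ρ) +
        lam * ∫ u, llr (gibbsMeasure R lam ρ) R u ∂gibbsMeasure R lam ρ = freeEnergy R lam ρ := by
  have := isProbabilityMeasure_gibbsMeasure (R := R) hlam hρ hρM
  have hf : Integrable (fun u => -ρ u / lam) (gibbsMeasure R lam ρ) :=
    (integrable_of_abs_le _ hρ hρM).neg.div_const lam
  rw [integral_congr_ae (llr_gibbsMeasure_ae hlam hρ hρM), integral_sub hf (integrable_const _),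
    integral_div, integral_neg, integral_const, probReal_univ, one_smul, freeEnergy]
  field_simp
  ring

lemma freeEnergy_le_integral_add_mul_llr (hlam : 0 < lam) (hρ : Measurable ρ)
    (hρM : ∀ u, |ρ u| ≤ M) (q : Measure α) [IsProbabilityMeasure q] (hqR : q ≪ R)
    (hq : Integrable (llr q R) q) :
    freeEnergy R lam ρ ≤ (∫ u, ρ u ∂q) + lam * ∫ u, llr q R u ∂q := by
  have hexp := integrable_exp_neg_div R hlam hρ hρM
  have hf : Integrable (fun u => -ρ u / lam) q := (integrable_of_abs_le q hρ hρM).neg.div_const lam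
  have hqG : q ≪ gibbsMeasure R lam ρ := hqR.trans (absolutelyContinuous_tilted hexp)
  have := isProbabilityMeasure_gibbsMeasure (R := R) hlam hρ hρM
  have hgibbs := integral_llr_nonneg hqG (integrable_llr_tilted_right hqR hf hq hexp)
  rw [integral_llr_tilted_right hqR hf hexp hq, integral_div, integral_neg] at hgibbs
  have hcancel : lam * ((-∫ u, ρ u ∂q) / lam) = -∫ u, ρ u ∂q := mul_div_cancel₀ _ hlam.ne'
  rw [freeEnergy]
  linarith [mul_nonneg hlam.le hgibbs]

theorem isLeast_freeEnergy (hlam : 0 < lam) (hρ : Measurable ρ) (hρM : ∀ u, |ρ u| ≤ M) :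
    IsLeast {v : ℝ | ∃ q : Measure α, IsProbabilityMeasure q ∧ q ≪ R ∧
      Integrable (llr q R) q ∧ v = (∫ u, ρ u ∂q) + lam * klReal q R} (freeEnergy R lam ρ) := by
  refine ⟨⟨gibbsMeasure R lam ρ, isProbabilityMeasure_gibbsMeasure hlam hρ hρM,
    tilted_absolutelyContinuous R _, integrable_llr_gibbsMeasure hlam hρ hρM,
    (integral_add_mul_llr_gibbsMeasure hlam hρ hρM).symm⟩, ?_⟩
  rintro v ⟨q, hq, hqR, hllr, rfl⟩
  exact freeEnergy_le_integral_add_mul_llr hlam hρ hρM q hqR hllr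

lemma abs_freeEnergy_le (hlam : 0 < lam) (hρ : Measurable ρ) (hρM : ∀ u, |ρ u| ≤ M) :
    |freeEnergy R lam ρ| ≤ M := by
  have := isProbabilityMeasure_gibbsMeasure (R := R) hlam hρ hρM
  have hllr_self : llr R R =ᵐ[R] 0 := llr_self R
  -- compare with the choice `q = R`, whose relative entropy vanishes
  have hupper := freeEnergy_le_integral_add_mul_llr hlam hρ hρM R .rfl
    ((integrable_zero _ _ _).congr hllr_self.symm)
  rw [integral_congr_ae hllr_self, Pi.zero_def, integral_zero, mul_zero, add_zero] at hupper
  have hlower := integral_add_mul_llr_gibbsMeasure (R := R) hlam hρ hρM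
  have hkl : 0 ≤ ∫ u, llr (gibbsMeasure R lam ρ) R u ∂gibbsMeasure R lam ρ :=
    integral_llr_nonneg (tilted_absolutelyContinuous R _)
      (integrable_llr_gibbsMeasure hlam hρ hρM)
  have hρR := abs_le.1 (abs_integral_le_of_abs_le R hρM)
  have hρG := abs_le.1 (abs_integral_le_of_abs_le (gibbsMeasure R lam ρ) hρM)
  exact abs_le.2 ⟨by linarith [mul_nonneg hlam.le hkl], by linarith⟩

end FreeEnergy

lemma measurable_freeEnergy (κ : Kernel X U) [IsSFiniteKernel κ]
    (lam : ℝ) {ρ : X → U → ℝ} (hρ : Measurable (Function.uncurry ρ)) :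
    Measurable fun x => freeEnergy (κ x) lam (ρ x) := by
  have hexp : Measurable (Function.uncurry fun x u => exp (-ρ x u / lam)) :=
    (hρ.neg.div_const lam).exp
  exact (hexp.stronglyMeasurable.integral_kernel_prod_right.measurable.log).const_mul (-lam)

lemma measurable_uncurry_add_comp {c : X → U → ℝ} {f : X → U → X} {J : X → ℝ}
    (hc : Measurable (Function.uncurry c)) (hf : Measurable (Function.uncurry f))
    (hJ : Measurable J) : Measurable (Function.uncurry fun x u => c x u + J (f x u)) :=
  hc.add (hJ.comp hf)

section ValueFunction

variable {C : ℕ → X → U → ℝ} {CT : X → ℝ} {F : ℕ → X → U → X} {R : ℕ → X → Measure U}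
  {lam : ℝ}

omit [MeasurableSpace X] in
lemma klBellman_succ_eq_freeEnergy (hlam : 0 < lam) {k t : ℕ} {x : X}
    [IsProbabilityMeasure (R t x)] {M : ℝ}
    (hρ : Measurable fun u => C t x u + klBellman C CT F R lam k (t + 1) (F t x u))
    (hρM : ∀ u, |C t x u + klBellman C CT F R lam k (t + 1) (F t x u)| ≤ M) :
    klBellman C CT F R lam (k + 1) t x =
      freeEnergy (R t x) lam fun u => C t x u + klBellman C CT F R lam k (t + 1) (F t x u) :=
  (isLeast_freeEnergy hlam hρ hρM).csInf_eq

lemma measurable_and_bounded_klBellman (hlam : 0 < lam)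
    (hRprob : ∀ t x, IsProbabilityMeasure (R t x)) (hRmeas : ∀ t, Measurable (R t))
    (hFmeas : ∀ t, Measurable (Function.uncurry (F t)))
    (hCmeas : ∀ t, Measurable (Function.uncurry (C t))) (hCTmeas : Measurable CT)
    {MC MT : ℝ} (hMC : ∀ t x u, |C t x u| ≤ MC) (hMT : ∀ x, |CT x| ≤ MT) (k : ℕ) :
    (∀ t, Measurable (klBellman C CT F R lam k t)) ∧
      ∃ B, ∀ t x, |klBellman C CT F R lam k t x| ≤ B := by
  induction k with
  | zero => exact ⟨fun _ => hCTmeas, MT, fun _ => hMT⟩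
  | succ k ih =>
    obtain ⟨hJ, B, hJB⟩ := ih
    have hρ := fun t => measurable_uncurry_add_comp (hCmeas t) (hFmeas t) (hJ (t + 1))
    have hρM : ∀ t x u, |C t x u + klBellman C CT F R lam k (t + 1) (F t x u)| ≤ MC + B :=
      fun t x u => (abs_add_le _ _).trans (add_le_add (hMC t x u) (hJB _ _))
    have hsucc : ∀ t x, klBellman C CT F R lam (k + 1) t x =
        freeEnergy (R t x) lam fun u => C t x u + klBellman C CT F R lam k (t + 1) (F t x u) :=
      fun t x => have := hRprob t x
        klBellman_succ_eq_freeEnergy hlam (hρ t).of_uncurry_left (hρM t x)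
    refine ⟨fun t => ?_, MC + B, fun t x => ?_⟩
    · have : IsMarkovKernel ⟨R t, hRmeas t⟩ := ⟨hRprob t⟩
      rw [funext (hsucc t)]
      exact measurable_freeEnergy ⟨R t, hRmeas t⟩ lam (hρ t)
    · have := hRprob t x
      exact hsucc t x ▸ abs_freeEnergy_le hlam (hρ t).of_uncurry_left (hρM t x)

end ValueFunction

/-- Bellman recursion for KL control: with deterministic dynamics,
bounded measurable costs, reference policy `R`, and `λ > 0`, the value function
satisfies `J_T = C_T` and
`J_t(x) = -λ log ∫ exp(-(C_t(x,u) + J_{t+1}(F_t(x,u)))/λ) R(du|x)`, and the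
minimizing policy is the Gibbs tilting
`Q*(B|x) = ∫_B exp(-ρ_t(x,u)/λ) R(du|x) / ∫ exp(-ρ_t(x,u)/λ) R(du|x)` where
`ρ_t(x,u) = C_t(x,u) + J_{t+1}(F_t(x,u))`. -/
theorem klBellman_recursion_gibbs
    (C : ℕ → X → U → ℝ) (CT : X → ℝ) (F : ℕ → X → U → X)
    (R : ℕ → X → Measure U) (lam : ℝ) (hlam : 0 < lam)
    (hRprob : ∀ t x, IsProbabilityMeasure (R t x))
    (hRmeas : ∀ t, Measurable (R t))
    (hFmeas : ∀ t, Measurable (Function.uncurry (F t)))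
    (hCmeas : ∀ t, Measurable (Function.uncurry (C t)))
    (hCTmeas : Measurable CT)
    (hCbdd : ∃ M : ℝ, ∀ t x u, |C t x u| ≤ M)
    (hCTbdd : ∃ M : ℝ, ∀ x, |CT x| ≤ M) :
    (∀ (t : ℕ) (x : X), klBellman C CT F R lam 0 t x = CT x) ∧
    ∀ (k t : ℕ) (x : X),
      (klBellman C CT F R lam (k + 1) t x =
        -lam * Real.log (∫ u,
          Real.exp (-(C t x u + klBellman C CT F R lam k (t + 1) (F t x u)) / lam)
            ∂(R t x))) ∧
      (let ρ : U → ℝ := fun u => C t x u + klBellman C CT F R lam k (t + 1) (F t x u)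
       let Z : ℝ := ∫ u, Real.exp (-ρ u / lam) ∂(R t x)
       let Qstar : Measure U :=
         (R t x).withDensity fun u => ENNReal.ofReal (Real.exp (-ρ u / lam) / Z)
       IsProbabilityMeasure Qstar ∧ Qstar ≪ R t x ∧
         (∫ u, ρ u ∂Qstar) + lam * klReal Qstar (R t x) =
           klBellman C CT F R lam (k + 1) t x ∧
         ∀ B : Set U, MeasurableSet B →
           Qstar B = ENNReal.ofReal ((∫ u in B, Real.exp (-ρ u / lam) ∂(R t x)) / Z)) := by
  obtain ⟨MC, hMC⟩ := hCbdd
  obtain ⟨MT, hMT⟩ := hCTbdd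
  refine ⟨fun t x => rfl, fun k t x => ?_⟩
  obtain ⟨hJ, MJ, hJM⟩ :=
    measurable_and_bounded_klBellman hlam hRprob hRmeas hFmeas hCmeas hCTmeas hMC hMT k
  have hρ : Measurable fun u => C t x u + klBellman C CT F R lam k (t + 1) (F t x u) :=
    (measurable_uncurry_add_comp (hCmeas t) (hFmeas t) (hJ (t + 1))).of_uncurry_left
  have hρM : ∀ u, |C t x u + klBellman C CT F R lam k (t + 1) (F t x u)| ≤ MC + MJ :=
    fun u => (abs_add_le _ _).trans (add_le_add (hMC t x u) (hJM _ _))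
  have := hRprob t x
  have hsucc := klBellman_succ_eq_freeEnergy hlam hρ hρM
  refine ⟨hsucc, isProbabilityMeasure_gibbsMeasure hlam hρ hρM, tilted_absolutelyContinuous _ _,
    hsucc ▸ integral_add_mul_llr_gibbsMeasure hlam hρ hρM, fun s _ => ?_⟩
  exact (tilted_apply_eq_ofReal_integral _ s).trans (by rw [integral_div])

end KLBellman
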